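/- arXiv:1303.0128 — 4 statements merged into one kernel-verified Lean document; each statement's English description precedes it below -/
import Mathlib

section
/- No local hidden variable theory can satisfy the generalized Hardy conditions: if for each party i there exist response functions f(x_i | u_i, λ) and f(x_i | v_i, λ) (nonnegative, summing to 1 over x_i ∈ {1,...,d_i}) and a probability density ρ(λ) such that joint probabilities factorize, then the three conditions P(∀i: u_i = 1) = q > 0, P(∀i≠r: u_i = 1, v_r ≠ d_r) = 0 for every r, and P(∀i: v_i = d_i) = 0 are jointly inconsistent. -/
open Finset

/-
Proof idea: since `P(∀ i, u_i = 1) > 0`, some hidden state `λ` of positive weight gives every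
outcome `u_i = 1` positive probability. At that `λ` the conditions `P(∀ i ≠ r, u_i = 1, v_r ≠ d_r) = 0`
force `v_r = d_r` with certainty for every `r`, so `λ` contributes `ρ(λ) > 0` to
`P(∀ i, v_i = d_i)`, which was assumed to vanish.
-/

section WeightedSum

variable {Ω : Type*} [Fintype Ω] {ρ g : Ω → ℝ}

lemma exists_pos_pos_of_sum_mul_pos (hρ : ∀ ω, 0 ≤ ρ ω) (hg : ∀ ω, 0 ≤ g ω)
    (h : 0 < ∑ ω, ρ ω * g ω) : ∃ ω, 0 < ρ ω ∧ 0 < g ω := by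
  obtain ⟨ω, -, hω⟩ := exists_ne_zero_of_sum_ne_zero h.ne'
  exact ⟨ω, (hρ ω).lt_of_ne (left_ne_zero_of_mul hω).symm,
    (hg ω).lt_of_ne (right_ne_zero_of_mul hω).symm⟩

lemma eq_zero_of_sum_mul_eq_zero (hρ : ∀ ω, 0 ≤ ρ ω) (hg : ∀ ω, 0 ≤ g ω)
    (h : ∑ ω, ρ ω * g ω = 0) {ω : Ω} (hω : 0 < ρ ω) : g ω = 0 := by
  have hterm := congrFun ((Fintype.sum_eq_zero_iff_of_nonneg
    fun ω ↦ mul_nonneg (hρ ω) (hg ω)).mp h) ω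
  exact (mul_eq_zero.mp hterm).resolve_left hω.ne'

end WeightedSum

lemma pos_of_prod_pos {ι : Type*} {s : Finset ι} {f : ι → ℝ} (hf : ∀ i ∈ s, 0 ≤ f i)
    (h : 0 < ∏ i ∈ s, f i) {i : ι} (hi : i ∈ s) : 0 < f i :=
  (hf i hi).lt_of_ne (prod_ne_zero_iff.mp h.ne' i hi).symm

lemma eq_one_of_sum_eq_one {α : Type*} [Fintype α] {p : α → ℝ} (hp : ∑ x, p x = 1) {a : α}
    (ha : ∀ x, x ≠ a → p x = 0) : p a = 1 := by
  rwa [Fintype.sum_eq_single a ha] at hp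

theorem statement0_general (n : ℕ) (d : Fin n → ℕ) (hd : ∀ i, 1 ≤ d i)
    (Ω : Type) [Fintype Ω] (ρ : Ω → ℝ)
    (f : (i : Fin n) → Bool → Ω → Fin (d i) → ℝ)
    (hρ0 : ∀ ω, 0 ≤ ρ ω)
    (hf0 : ∀ i b ω x, 0 ≤ f i b ω x)
    (hf1 : ∀ i b ω, ∑ x, f i b ω x = 1)
    (q : ℝ) (hq : 0 < q)
    (h1 : ∑ ω, ρ ω * ∏ i, f i false ω ⟨0, hd i⟩ = q)
    (h2 : ∀ (r : Fin n) (v : Fin (d r)), v ≠ ⟨d r - 1, Nat.sub_lt (hd r) Nat.one_pos⟩ →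
      ∑ ω, ρ ω * (f r true ω v * ∏ i ∈ univ.erase r, f i false ω ⟨0, hd i⟩) = 0)
    (h3 : ∑ ω, ρ ω * ∏ i, f i true ω ⟨d i - 1, Nat.sub_lt (hd i) Nat.one_pos⟩ = 0) :
    False := by
  obtain ⟨ω, hρω, hu⟩ := exists_pos_pos_of_sum_mul_pos hρ0
    (fun ω ↦ prod_nonneg fun i _ ↦ hf0 i false ω _) (h1 ▸ hq)
  have hu_erase (r : Fin n) : 0 < ∏ i ∈ univ.erase r, f i false ω ⟨0, hd i⟩ :=
    prod_pos fun i _ ↦ pos_of_prod_pos (fun i _ ↦ hf0 i false ω _) hu (mem_univ i)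
  have hv_ne (r : Fin n) (v : Fin (d r)) (hv : v ≠ ⟨d r - 1, Nat.sub_lt (hd r) Nat.one_pos⟩) :
      f r true ω v = 0 :=
    (mul_eq_zero.mp (eq_zero_of_sum_mul_eq_zero hρ0
      (fun ω ↦ mul_nonneg (hf0 r true ω v) (prod_nonneg fun i _ ↦ hf0 i false ω _))
      (h2 r v hv) hρω)).resolve_right (hu_erase r).ne'
  have hv_top (r : Fin n) : f r true ω ⟨d r - 1, Nat.sub_lt (hd r) Nat.one_pos⟩ = 1 :=
    eq_one_of_sum_eq_one (hf1 r true ω) (hv_ne r)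
  have hv_all := eq_zero_of_sum_mul_eq_zero hρ0
    (fun ω ↦ prod_nonneg fun i _ ↦ hf0 i true ω _) h3 hρω
  simp [hv_top] at hv_all

/-- No local hidden variable theory can satisfy the generalized
Hardy conditions (1): `P(∀ i : u_i = 1) = q > 0`,
`P(∀ i ≠ r : u_i = 1, v_r ≠ d_r) = 0` for every `r`, and `P(∀ i : v_i = d_i) = 0`.
Settings: `false` = `u_i`, `true` = `v_i`; outcomes of party `i` are `Fin (d i)`,
with outcome "1" being `⟨0, _⟩` and outcome "d_i" being `⟨d i - 1, _⟩`. -/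
theorem statement0 (n : ℕ) (hn : 0 < n) (d : Fin n → ℕ) (hd : ∀ i, 1 ≤ d i)
    (Ω : Type) [Fintype Ω] (ρ : Ω → ℝ)
    (f : (i : Fin n) → Bool → Ω → Fin (d i) → ℝ)
    (hρ0 : ∀ ω, 0 ≤ ρ ω) (hρ1 : ∑ ω, ρ ω = 1)
    (hf0 : ∀ i b ω x, 0 ≤ f i b ω x)
    (hf1 : ∀ i b ω, ∑ x, f i b ω x = 1)
    (q : ℝ) (hq : 0 < q)
    (h1 : ∑ ω, ρ ω * ∏ i, f i false ω ⟨0, hd i⟩ = q)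
    (h2 : ∀ (r : Fin n) (v : Fin (d r)), v ≠ ⟨d r - 1, Nat.sub_lt (hd r) Nat.one_pos⟩ →
      ∑ ω, ρ ω * (f r true ω v * ∏ i ∈ univ.erase r, f i false ω ⟨0, hd i⟩) = 0)
    (h3 : ∑ ω, ρ ω * ∏ i, f i true ω ⟨d i - 1, Nat.sub_lt (hd i) Nat.one_pos⟩ = 0) :
    False :=
  statement0_general n d hd Ω ρ f hρ0 hf0 hf1 q hq h1 h2 h3
end

section
/- Any probability assignment (box) satisfying the modified Hardy conditions for n parties cannot be bi-separable with respect to any bipartition: if joint probabilities decompose as P(∀i: x̂_i = x_i) = Σ_k p_k Q_k(∀ j∈A: x̂_j = x_j) R_k(∀ l∈B: x̂_l = x_l) for a bipartition (A,B) of the parties into the first m and last n−m parties, where each Q_k, R_k is a no-signaling box on its subset of parties and p_k > 0 sum to 1, then the conditions P(∀i: u_i = 1) = q > 0, P(v_r ≠ d_r, u_{r+1} = 1) = 0 for all r (cyclic), and P(∀i: v_i = d_i) = 0 cannot all hold. -/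
open Finset

/-! Pick a component `k` of the decomposition with `Q k` and `R k` positive at `(u, 1, …, u, 1)`.
Switch the parties `0, …, m - 1` one at a time from `u` to `v`: no-signaling of `Q k` keeps some
outcome of the switched party `t` possible, and since party `t + 1` still measures `u` with
outcome `1` while `R k` stays positive, the Hardy condition for `t` forces that outcome to be `d_t`.
Independently, the same ladder for `R k` over the parties `m, …, n - 1` works too, because the
cyclic successor of `n - 1` is party `0`, untouched in `Q k`. By locality the two ladders combine
into a positive weight of `(v, d, …, v, d)`, against the last Hardy condition. -/

-- Spelled as in the Hardy conditions, rather than via `finRotate`, so that they apply verbatim.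
def Fin.cyclicSucc {n : ℕ} (r : Fin n) : Fin n :=
  ⟨(r.1 + 1) % n, Nat.mod_lt _ (Nat.zero_lt_of_lt r.2)⟩

lemma Fin.cyclicSucc_val {n : ℕ} (r : Fin n) :
    (r.cyclicSucc : ℕ) = if r.1 + 1 < n then r.1 + 1 else 0 := by
  unfold Fin.cyclicSucc
  split_ifs with h
  · exact Nat.mod_eq_of_lt h
  · simp [show r.1 + 1 = n by omega]

section Box

variable {ι : Type*} [DecidableEq ι] {α : ι → Type*} [∀ i, Fintype (α i)]

def IsNoSignaling (B : (ι → Bool) → ((i : ι) → α i) → ℝ) : Prop :=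
  ∀ (j : ι) (s s' : ι → Bool) (x : (i : ι) → α i), (∀ i ≠ j, s i = s' i) →
    ∑ y : α j, B s (Function.update x j y) = ∑ y : α j, B s' (Function.update x j y)

lemma IsNoSignaling.exists_pos_update {B : (ι → Bool) → ((i : ι) → α i) → ℝ}
    (hB : IsNoSignaling B) (hB0 : ∀ s x, 0 ≤ B s x) {j : ι} {s s' : ι → Bool}
    (hss' : ∀ i ≠ j, s i = s' i) {x : (i : ι) → α i} (hx : 0 < B s x) :
    ∃ y, 0 < B s' (Function.update x j y) := by
  have hsum : 0 < ∑ y : α j, B s' (Function.update x j y) := by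
    rw [← hB j s s' x hss']
    refine hx.trans_le ?_
    simpa using single_le_sum (fun y _ => hB0 s (Function.update x j y)) (mem_univ (x j))
  by_contra! h
  exact hsum.not_ge (sum_nonpos fun y _ => h y)

end Box

lemma eq_zero_of_sum_mul_eq_zero_s4 {K : Type*} [Fintype K] {p f : K → ℝ} (hp : ∀ k, 0 < p k)
    (hf : ∀ k, 0 ≤ f k) (h : ∑ k, p k * f k = 0) (k : K) : f k = 0 := by
  have := (sum_eq_zero_iff_of_nonneg fun k _ => mul_nonneg (hp k).le (hf k)).1 h k (mem_univ k)
  exact (mul_eq_zero.1 this).resolve_left (hp k).ne'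

lemma exists_pos_of_sum_mul_pos {K : Type*} [Fintype K] {p f : K → ℝ}
    (h : 0 < ∑ k, p k * f k) (hp : ∀ k, 0 < p k) : ∃ k, 0 < f k := by
  by_contra! hf
  exact h.not_ge (sum_nonpos fun k _ => mul_nonpos_of_nonneg_of_nonpos (hp k).le (hf k))

lemma eq_zero_of_sum_ite_eq_zero {β : Type*} [Fintype β] {c : β → Prop} [DecidablePred c]
    {f : β → ℝ} (hf : ∀ x, 0 ≤ f x) (h : ∑ x, (if c x then f x else 0) = 0) {x : β}
    (hx : c x) : f x = 0 := by
  rw [← sum_filter] at h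
  exact (sum_eq_zero_iff_of_nonneg fun y _ => hf y).1 h x (mem_filter.2 ⟨mem_univ x, hx⟩)

section Ladder

variable {n : ℕ} {α : Fin n → Type*} (bot top : (i : Fin n) → α i)

def rungSettings (a t : ℕ) : Fin n → Bool := fun i => decide (a ≤ i.1 ∧ i.1 < t)

def rungOutcomes (a t : ℕ) : (i : Fin n) → α i :=
  fun i => if a ≤ i.1 ∧ i.1 < t then top i else bot i

lemma rungSettings_self (a : ℕ) : rungSettings (n := n) a a = fun _ => false := by
  funext i; simp [rungSettings]

lemma rungOutcomes_self (a : ℕ) : rungOutcomes bot top a a = bot := by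
  funext i; simp [rungOutcomes]

lemma rungSettings_succ_eq_of_ne (a : ℕ) {i j : Fin n} (hij : i ≠ j) :
    rungSettings a j i = rungSettings a (j + 1) i := by
  have : i.1 ≠ j := fun h => hij (Fin.ext h)
  simp only [rungSettings, decide_eq_decide]
  omega

lemma update_rungOutcomes {a : ℕ} {j : Fin n} (hat : a ≤ j) :
    Function.update (rungOutcomes bot top a j) j (top j) = rungOutcomes bot top a (j + 1) := by
  funext i
  rcases eq_or_ne i j with rfl | hij
  · simp [rungOutcomes, hat]
  · have : i.1 ≠ j := fun h => hij (Fin.ext h)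
    simp only [Function.update_of_ne hij, rungOutcomes]
    congr 1
    exact propext (by omega)

/-- The window `[a, b)` must leave out a party, so that the cyclic successor of each newly
switched party still measures `u` with outcome `bot`. -/
theorem ladder_pos [∀ i, Fintype (α i)] {B : (Fin n → Bool) → ((i : Fin n) → α i) → ℝ}
    (hB : IsNoSignaling B) (hB0 : ∀ s x, 0 ≤ B s x) {a b : ℕ} (hbn : b ≤ n)
    (hwindow : 0 < a ∨ b < n)
    (hhardy : ∀ (r : Fin n) (s : Fin n → Bool) (x : (i : Fin n) → α i),
      (∀ i : Fin n, ¬(a ≤ i.1 ∧ i.1 < b) → s i = false ∧ x i = bot i) →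
      s r = true → s r.cyclicSucc = false → x r ≠ top r → x r.cyclicSucc = bot _ →
      B s x = 0)
    (hbase : 0 < B (fun _ => false) bot) (hab : a ≤ b) :
    0 < B (rungSettings a b) (rungOutcomes bot top a b) := by
  suffices h : ∀ t, a ≤ t → t ≤ b → 0 < B (rungSettings a t) (rungOutcomes bot top a t) from
    h b hab le_rfl
  intro t hat
  induction t, hat using Nat.le_induction with
  | base => exact fun _ => by rwa [rungSettings_self, rungOutcomes_self]
  | succ t hat ih =>
    intro htb
    obtain ⟨j, rfl⟩ : ∃ j : Fin n, j.1 = t := ⟨⟨t, by omega⟩, rfl⟩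
    have hsucc : ¬(a ≤ (j.cyclicSucc : ℕ) ∧ (j.cyclicSucc : ℕ) < j + 1) := by
      rw [Fin.cyclicSucc_val]; split_ifs <;> omega
    have hsucc_ne : j.cyclicSucc ≠ j := fun h => hsucc (by rw [h]; omega)
    obtain ⟨y, hy⟩ := hB.exists_pos_update hB0
      (fun i => rungSettings_succ_eq_of_ne a) (ih (by omega))
    obtain rfl : y = top j := by
      by_contra hyj
      refine hy.ne' (hhardy j _ _ (fun i hi => ⟨?_, ?_⟩) (by simp [rungSettings, hat]) ?_ ?_ ?_)
      · simp only [rungSettings, decide_eq_false_iff_not]; omega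
      · have hij : i ≠ j := fun h => hi (h ▸ ⟨hat, by omega⟩)
        rw [Function.update_of_ne hij, rungOutcomes, if_neg (by omega)]
      · simpa [rungSettings] using hsucc
      · rwa [Function.update_self]
      · rw [Function.update_of_ne hsucc_ne, rungOutcomes, if_neg (by omega)]
    rwa [update_rungOutcomes bot top hat] at hy

end Ladder

-- Settings: `false` is `u_i`, `true` is `v_i`; outcome `1` is `⟨0, _⟩`, outcome `d_i` is
-- `⟨d i - 1, _⟩`.
theorem statement4_general (n m : ℕ) (hm : 0 < m) (hmn : m < n)
    (d : Fin n → ℕ) (hd : ∀ i, 1 ≤ d i)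
    (K : Type) [Fintype K] (p : K → ℝ) (hp : ∀ k, 0 < p k)
    (Q R : K → (Fin n → Bool) → ((i : Fin n) → Fin (d i)) → ℝ)
    (hQ0 : ∀ k s x, 0 ≤ Q k s x) (hR0 : ∀ k s x, 0 ≤ R k s x)
    -- `Q k` is a box on the first `m` parties, `R k` on the remaining ones:
    (hQdep : ∀ k s s' x x', (∀ i : Fin n, i.1 < m → (s i = s' i ∧ x i = x' i)) →
      Q k s x = Q k s' x')
    (hRdep : ∀ k s s' x x', (∀ i : Fin n, m ≤ i.1 → (s i = s' i ∧ x i = x' i)) →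
      R k s x = R k s' x')
    -- no-signaling of each `Q k` and `R k`:
    (hQns : ∀ k (j : Fin n) (s s' : Fin n → Bool) (x : (i : Fin n) → Fin (d i)),
      (∀ i ≠ j, s i = s' i) →
      ∑ y : Fin (d j), Q k s (Function.update x j y) =
        ∑ y : Fin (d j), Q k s' (Function.update x j y))
    (hRns : ∀ k (j : Fin n) (s s' : Fin n → Bool) (x : (i : Fin n) → Fin (d i)),
      (∀ i ≠ j, s i = s' i) →
      ∑ y : Fin (d j), R k s (Function.update x j y) =
        ∑ y : Fin (d j), R k s' (Function.update x j y))
    -- the bi-separable decomposition of the global behavior `P`: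
    (P : (Fin n → Bool) → ((i : Fin n) → Fin (d i)) → ℝ)
    (hP : ∀ s x, P s x = ∑ k, p k * (Q k s x * R k s x))
    -- the modified Hardy conditions:
    (q : ℝ) (hq : 0 < q)
    (h1 : P (fun _ => false) (fun i => ⟨0, hd i⟩) = q)
    (h2 : ∀ r : Fin n, ∀ s : Fin n → Bool, s r = true →
      s ⟨(r.1 + 1) % n, Nat.mod_lt _ (Nat.zero_lt_of_lt r.2)⟩ = false →
      ∑ x : (i : Fin n) → Fin (d i),
        (if x r ≠ ⟨d r - 1, Nat.sub_lt (hd r) Nat.one_pos⟩ ∧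
            x ⟨(r.1 + 1) % n, Nat.mod_lt _ (Nat.zero_lt_of_lt r.2)⟩ =
              ⟨0, hd ⟨(r.1 + 1) % n, Nat.mod_lt _ (Nat.zero_lt_of_lt r.2)⟩⟩
          then P s x else 0) = 0)
    (h3 : P (fun _ => true) (fun i => ⟨d i - 1, Nat.sub_lt (hd i) Nat.one_pos⟩) = 0) :
    False := by
  set bot : (i : Fin n) → Fin (d i) := fun i => ⟨0, hd i⟩
  set top : (i : Fin n) → Fin (d i) := fun i => ⟨d i - 1, Nat.sub_lt (hd i) Nat.one_pos⟩
  have hQR0 : ∀ s x k, 0 ≤ Q k s x * R k s x := fun s x k => mul_nonneg (hQ0 k s x) (hR0 k s x)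
  have hP0 : ∀ s x, 0 ≤ P s x := fun s x =>
    (hP s x).symm ▸ sum_nonneg fun k _ => mul_nonneg (hp k).le (hQR0 s x k)
  have hardy : ∀ k r s x, s r = true → s r.cyclicSucc = false → x r ≠ top r →
      x r.cyclicSucc = bot r.cyclicSucc → Q k s x * R k s x = 0 :=
    fun k r s x hs hs' hx hx' => eq_zero_of_sum_mul_eq_zero_s4 hp (hQR0 s x)
      ((hP s x).symm.trans (eq_zero_of_sum_ite_eq_zero (hP0 s) (h2 r s hs hs') ⟨hx, hx'⟩)) k
  obtain ⟨k, hk⟩ := exists_pos_of_sum_mul_pos (hP _ _ ▸ h1 ▸ hq) hp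
  have hQk := pos_of_mul_pos_left hk (hR0 _ _ _)
  have hRk := pos_of_mul_pos_right hk (hQ0 _ _ _)
  have hQ : 0 < Q k (rungSettings 0 m) (rungOutcomes bot top 0 m) :=
    ladder_pos bot top (hQns k) (hQ0 k) hmn.le (Or.inr hmn)
      (fun r s x hout hs hs' hx hx' => (mul_eq_zero.1 (hardy k r s x hs hs' hx hx')).resolve_right
        (hRdep k s _ x bot (fun i hi => hout i (by omega)) ▸ hRk.ne'))
      hQk m.zero_le
  have hR : 0 < R k (rungSettings m n) (rungOutcomes bot top m n) :=
    ladder_pos bot top (hRns k) (hR0 k) le_rfl (Or.inl hm)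
      (fun r s x hout hs hs' hx hx' => (mul_eq_zero.1 (hardy k r s x hs hs' hx hx')).resolve_left
        (hQdep k s _ x bot (fun i hi => hout i (by omega)) ▸ hQk.ne'))
      hRk hmn.le
  have hQv : Q k (fun _ => true) top = Q k (rungSettings 0 m) (rungOutcomes bot top 0 m) :=
    hQdep k _ _ _ _ fun i hi => ⟨by simp [rungSettings, hi], by simp [rungOutcomes, hi]⟩
  have hRv : R k (fun _ => true) top = R k (rungSettings m n) (rungOutcomes bot top m n) :=
    hRdep k _ _ _ _ fun i hi => ⟨by simp [rungSettings, hi], by simp [rungOutcomes, hi]⟩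
  have hv := eq_zero_of_sum_mul_eq_zero_s4 hp (hQR0 _ _) ((hP _ _).symm.trans h3) k
  rw [hQv, hRv] at hv
  exact (mul_pos hQ hR).ne' hv

/-- A behavior (box) satisfying the modified Hardy conditions cannot be
bi-separable with respect to the bipartition into the first `m` and the last `n - m`
parties: if `P(s, x) = ∑ k, p k * Q k (s, x) * R k (s, x)` with `p k > 0` summing to `1`,
`Q k` depending only on the parties `i < m`, `R k` only on the parties `i ≥ m`, each of
them being a no-signaling box, then the conditions `P(∀ i : u_i = 1) = q > 0`,
`P(v_r ≠ d_r, u_{r+1} = 1) = 0` for all `r` (cyclically), and `P(∀ i : v_i = d_i) = 0`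
cannot all hold.  Settings: `false` = `u_i`, `true` = `v_i`; outcome "1" is `⟨0, _⟩` and
outcome "d_i" is `⟨d i - 1, _⟩`. -/
theorem statement4 (n m : ℕ) (hm : 0 < m) (hmn : m < n)
    (d : Fin n → ℕ) (hd : ∀ i, 1 ≤ d i)
    (K : Type) [Fintype K] (p : K → ℝ) (hp : ∀ k, 0 < p k) (hp1 : ∑ k, p k = 1)
    (Q R : K → (Fin n → Bool) → ((i : Fin n) → Fin (d i)) → ℝ)
    (hQ0 : ∀ k s x, 0 ≤ Q k s x) (hR0 : ∀ k s x, 0 ≤ R k s x)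
    -- `Q k` is a box on the first `m` parties, `R k` on the remaining ones:
    (hQdep : ∀ k s s' x x', (∀ i : Fin n, i.1 < m → (s i = s' i ∧ x i = x' i)) →
      Q k s x = Q k s' x')
    (hRdep : ∀ k s s' x x', (∀ i : Fin n, m ≤ i.1 → (s i = s' i ∧ x i = x' i)) →
      R k s x = R k s' x')
    -- no-signaling of each `Q k` and `R k`:
    (hQns : ∀ k (j : Fin n) (s s' : Fin n → Bool) (x : (i : Fin n) → Fin (d i)),
      (∀ i ≠ j, s i = s' i) →
      ∑ y : Fin (d j), Q k s (Function.update x j y) =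
        ∑ y : Fin (d j), Q k s' (Function.update x j y))
    (hRns : ∀ k (j : Fin n) (s s' : Fin n → Bool) (x : (i : Fin n) → Fin (d i)),
      (∀ i ≠ j, s i = s' i) →
      ∑ y : Fin (d j), R k s (Function.update x j y) =
        ∑ y : Fin (d j), R k s' (Function.update x j y))
    -- the bi-separable decomposition of the global behavior `P`:
    (P : (Fin n → Bool) → ((i : Fin n) → Fin (d i)) → ℝ)
    (hP : ∀ s x, P s x = ∑ k, p k * (Q k s x * R k s x))
    (hPnorm : ∀ s, ∑ x, P s x = 1)
    -- the modified Hardy conditions: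
    (q : ℝ) (hq : 0 < q)
    (h1 : P (fun _ => false) (fun i => ⟨0, hd i⟩) = q)
    (h2 : ∀ r : Fin n, ∀ s : Fin n → Bool, s r = true →
      s ⟨(r.1 + 1) % n, Nat.mod_lt _ (Nat.zero_lt_of_lt r.2)⟩ = false →
      ∑ x : (i : Fin n) → Fin (d i),
        (if x r ≠ ⟨d r - 1, Nat.sub_lt (hd r) Nat.one_pos⟩ ∧
            x ⟨(r.1 + 1) % n, Nat.mod_lt _ (Nat.zero_lt_of_lt r.2)⟩ =
              ⟨0, hd ⟨(r.1 + 1) % n, Nat.mod_lt _ (Nat.zero_lt_of_lt r.2)⟩⟩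
          then P s x else 0) = 0)
    (h3 : P (fun _ => true) (fun i => ⟨d i - 1, Nat.sub_lt (hd i) Nat.one_pos⟩) = 0) :
    False :=
  statement4_general n m hm hmn d hd K p hp Q R hQ0 hR0 hQdep hRdep hQns hRns P hP q hq h1 h2 h3
end

section
/- In the 3-qubit Hardy construction, the seven product states |φ_0⟩ = |v_1=2⟩|v_2=2⟩|v_3=2⟩, |φ_1⟩ = |v_1=1⟩|u_2=1⟩|u_3=1⟩, |φ_2⟩ = |v_1=1⟩|u_2=1⟩|u_3=2⟩, |φ_3⟩ = |u_1=1⟩|v_2=1⟩|u_3=1⟩, |φ_4⟩ = |u_1=2⟩|v_2=1⟩|u_3=1⟩, |φ_5⟩ = |u_1=1⟩|u_2=1⟩|v_3=1⟩, |φ_6⟩ = |u_1=1⟩|u_2=2⟩|v_3=1⟩, together with |φ_7⟩ = |u_1=1⟩|u_2=1⟩|u_3=1⟩, are linearly independent in (ℂ²)^⊗3. -/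
/-!
Pair the eight states `φ k` with eight product test vectors `w i`. Because `|v_j=2⟩ ⊥ |v_j=1⟩`
and `|u_j=2⟩ ⊥ |u_j=1⟩`, the `w i` can be chosen so that for every `k > i` some tensor factor of
`w i` is orthogonal to the matching factor of `φ k`, while `⟪w i, φ i⟫` is a product of the nonzero
numbers `±α_j`, `β_j` and `‖u_j‖²`. The pairing matrix is then lower triangular with nonzero
diagonal.
-/

/-- The product state `|a⟩|b⟩|c⟩` of three qubits, as an element of `(ℂ²)^⊗3`
modeled by `EuclideanSpace ℂ (Fin 2 × Fin 2 × Fin 2)`. -/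
noncomputable def prod3 (a b c : EuclideanSpace ℂ (Fin 2)) :
    EuclideanSpace ℂ (Fin 2 × Fin 2 × Fin 2) :=
  (WithLp.equiv 2 _).symm (fun p => a p.1 * b p.2.1 * c p.2.2)

open scoped InnerProductSpace ComplexConjugate

theorem linearIndependent_of_triangular_dual {R V ι : Type*} [CommRing R] [IsDomain R]
    [AddCommGroup V] [Module R V] [Fintype ι] [LinearOrder ι] (φ : ι → V)
    (f : ι → Module.Dual R V) (htri : ∀ i k, i < k → f i (φ k) = 0)
    (hdiag : ∀ i, f i (φ i) ≠ 0) : LinearIndependent R φ := by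
  classical
  let M : Matrix ι ι R := Matrix.of fun i k => f i (φ k)
  have hM : M.IsLowerTriangular := fun i k hik => htri i k hik
  have hdet : M.det ≠ 0 := by
    rw [M.det_of_isLowerTriangular hM]
    exact Finset.prod_ne_zero_iff.mpr fun i _ => hdiag i
  exact (Matrix.linearIndependent_cols_of_det_ne_zero hdet).of_comp (LinearMap.pi f)

namespace Orthonormal

variable {𝕜 E : Type*} [RCLike 𝕜] [NormedAddCommGroup E] [InnerProductSpace 𝕜 E]
  {e : Fin 2 → E} (he : Orthonormal 𝕜 e) (α β : 𝕜)
include he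

theorem inner_one_zero : ⟪e 1, e 0⟫_𝕜 = 0 := he.2 (by decide)

theorem inner_zero_comb : ⟪e 0, α • e 0 + β • e 1⟫_𝕜 = α := by
  simp [inner_add_right, inner_smul_right, he.1, orthonormal_iff_ite.mp he]

theorem inner_one_comb : ⟪e 1, α • e 0 + β • e 1⟫_𝕜 = β := by
  simp [inner_add_right, inner_smul_right, he.1, orthonormal_iff_ite.mp he]

theorem inner_perp_zero : ⟪conj β • e 0 - conj α • e 1, e 0⟫_𝕜 = β := by
  simp [inner_sub_left, inner_smul_left, he.1, orthonormal_iff_ite.mp he]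

theorem inner_perp_one : ⟪conj β • e 0 - conj α • e 1, e 1⟫_𝕜 = -α := by
  simp [inner_sub_left, inner_smul_left, he.1, orthonormal_iff_ite.mp he]

theorem inner_perp_comb : ⟪conj β • e 0 - conj α • e 1, α • e 0 + β • e 1⟫_𝕜 = 0 := by
  simp [inner_sub_left, inner_smul_left, inner_add_right, inner_smul_right, he.1,
    orthonormal_iff_ite.mp he]
  ring

theorem inner_comb_perp : ⟪α • e 0 + β • e 1, conj β • e 0 - conj α • e 1⟫_𝕜 = 0 := by
  rw [← inner_conj_symm, he.inner_perp_comb, map_zero]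

theorem comb_ne_zero {α : 𝕜} (hα : α ≠ 0) : α • e 0 + β • e 1 ≠ 0 := by
  intro h
  exact hα (by rw [← he.inner_zero_comb α β, h, inner_zero_right])

theorem perp_ne_zero {β : 𝕜} (hβ : β ≠ 0) : conj β • e 0 - conj α • e 1 ≠ 0 := by
  intro h
  exact hβ (by rw [← he.inner_perp_zero α β, h, inner_zero_left])

end Orthonormal

theorem inner_prod3 (a b c a' b' c' : EuclideanSpace ℂ (Fin 2)) :
    ⟪prod3 a b c, prod3 a' b' c'⟫_ℂ = ⟪a, a'⟫_ℂ * ⟪b, b'⟫_ℂ * ⟪c, c'⟫_ℂ := by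
  simp [prod3, PiLp.inner_apply, Fintype.sum_prod_type, Fin.sum_univ_two, map_mul]
  ring

theorem statement6_general (v u : Fin 3 → Fin 2 → EuclideanSpace ℂ (Fin 2))
    (hv : ∀ j, Orthonormal ℂ (v j))
    (α β : Fin 3 → ℂ)
    (hα : ∀ j, 0 < ‖α j‖ ∧ ‖α j‖ < 1)
    (hβ : ∀ j, 0 < ‖β j‖ ∧ ‖β j‖ < 1)
    (hu0 : ∀ j, u j 0 = α j • v j 0 + β j • v j 1)
    (hu1 : ∀ j, u j 1 = (starRingEnd ℂ) (β j) • v j 0 - (starRingEnd ℂ) (α j) • v j 1) :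
    LinearIndependent ℂ
      ![prod3 (v 0 1) (v 1 1) (v 2 1),
        prod3 (v 0 0) (u 1 0) (u 2 0),
        prod3 (v 0 0) (u 1 0) (u 2 1),
        prod3 (u 0 0) (v 1 0) (u 2 0),
        prod3 (u 0 1) (v 1 0) (u 2 0),
        prod3 (u 0 0) (u 1 0) (v 2 0),
        prod3 (u 0 0) (u 1 1) (v 2 0),
        prod3 (u 0 0) (u 1 0) (u 2 0)] := by
  have hα0 : ∀ j, α j ≠ 0 := fun j => norm_pos_iff.mp (hα j).1
  have hβ0 : ∀ j, β j ≠ 0 := fun j => norm_pos_iff.mp (hβ j).1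
  let w : Fin 8 → EuclideanSpace ℂ (Fin 2 × Fin 2 × Fin 2) :=
    ![prod3 (u 0 1) (u 1 1) (u 2 1),
      prod3 (u 0 1) (v 1 1) (u 2 0),
      prod3 (u 0 1) (v 1 0) (u 2 1),
      prod3 (u 0 0) (u 1 1) (v 2 1),
      prod3 (u 0 1) (u 1 1) (v 2 0),
      prod3 (v 0 1) (u 1 0) (u 2 1),
      prod3 (v 0 0) (u 1 1) (u 2 1),
      prod3 (v 0 1) (v 1 1) (v 2 1)]
  refine linearIndependent_of_triangular_dual _ (fun i => innerₛₗ ℂ (w i)) ?_ ?_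
  · intro i k hik
    fin_cases i <;> fin_cases k <;> simp only [Fin.reduceFinMk, Fin.reduceLT] at hik <;>
      simp only [Fin.reduceFinMk, innerₛₗ_apply_apply, w, Matrix.cons_val, inner_prod3, hu0, hu1,
        (hv _).inner_one_zero, (hv _).inner_perp_comb, (hv _).inner_comb_perp, mul_zero, zero_mul]
  · intro i
    fin_cases i <;>
      simp only [Fin.reduceFinMk, innerₛₗ_apply_apply, w, Matrix.cons_val, inner_prod3, hu0, hu1,
        (hv _).inner_zero_comb, (hv _).inner_one_comb, (hv _).inner_perp_zero,
        (hv _).inner_perp_one] <;>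
      simp [(hv _).comb_ne_zero, (hv _).perp_ne_zero, hα0, hβ0]

/-- In the 3-qubit Hardy construction (with `|v_j=1⟩ = v j 0`,
`|v_j=2⟩ = v j 1` an orthonormal basis of `ℂ²` and
`|u_j=1⟩ = α_j|v_j=1⟩ + β_j|v_j=2⟩`, `|u_j=2⟩ = β_j*|v_j=1⟩ − α_j*|v_j=2⟩`,
`0 < |α_j|, |β_j| < 1`), the eight product states
`|φ_0⟩, …, |φ_7⟩` are linearly independent in `(ℂ²)^⊗3`. -/
theorem statement6 (v u : Fin 3 → Fin 2 → EuclideanSpace ℂ (Fin 2))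
    (hv : ∀ j, Orthonormal ℂ (v j))
    (α β : Fin 3 → ℂ)
    (hnorm : ∀ j, ‖α j‖ ^ 2 + ‖β j‖ ^ 2 = 1)
    (hα : ∀ j, 0 < ‖α j‖ ∧ ‖α j‖ < 1)
    (hβ : ∀ j, 0 < ‖β j‖ ∧ ‖β j‖ < 1)
    (hu0 : ∀ j, u j 0 = α j • v j 0 + β j • v j 1)
    (hu1 : ∀ j, u j 1 = (starRingEnd ℂ) (β j) • v j 0 - (starRingEnd ℂ) (α j) • v j 1) :
    LinearIndependent ℂ
      ![prod3 (v 0 1) (v 1 1) (v 2 1),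
        prod3 (v 0 0) (u 1 0) (u 2 0),
        prod3 (v 0 0) (u 1 0) (u 2 1),
        prod3 (u 0 0) (v 1 0) (u 2 0),
        prod3 (u 0 1) (v 1 0) (u 2 0),
        prod3 (u 0 0) (u 1 0) (v 2 0),
        prod3 (u 0 0) (u 1 1) (v 2 0),
        prod3 (u 0 0) (u 1 0) (u 2 0)] :=
  statement6_general v u hv α β hα hβ hu0 hu1
end

section
/- Under the no-signaling and normalization constraints, the maximum of the success probability P(u_1=1, u_2=1, u_3=1) subject to the modified Hardy zero conditions for three two-outcome parties (P(v_r ≠ 2, u_{r+1}=1) = 0 for r = 1,2,3 cyclically and P(v_1=2, v_2=2, v_3=2) = 0) equals 1/3. -/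
/-!
Hardy's chain argument, with settings `u`, `v` encoded as `false`, `true` and outcomes `1`, `2`
as `0`, `1`. Switch the parties of the success event (settings `u u u`, outcomes
`1 1 1`) to `v` one at a time, in the cyclic order `r - 1`, `r`, `r + 1`. No-signaling keeps the
marginal of the other two parties, and in the first two steps a zero condition rules out the
outcome `1` of the switched party; in the last one `P(2 2 2 | v v v) = 0` rules out `2`. Hence
the success probability is at most `P(x | v v v)` where `x` is `1` at party `r + 1` and `2`
elsewhere. These three outcomes are distinct, so three times the success probability is at most
one. The bound is attained by a no-signaling box that is uniform on three outcomes per setting.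
-/

open Finset Function

section NoSignaling

variable {ι S O : Type*} [DecidableEq ι] [Fintype O]

def NoSignaling (P : (ι → S) → (ι → O) → ℝ) : Prop :=
  ∀ (j : ι) (s s' : ι → S) (x : ι → O), (∀ i ≠ j, s i = s' i) →
    ∑ y : O, P s (update x j y) = ∑ y : O, P s' (update x j y)

theorem NoSignaling.le_sum_update {P : (ι → S) → (ι → O) → ℝ} (hns : NoSignaling P)
    (hP : ∀ s x, 0 ≤ P s x) (j : ι) (s : ι → S) (x : ι → O) (a : S) :
    P s x ≤ ∑ y, P (update s j a) (update x j y) :=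
  calc P s x = P s (update x j (x j)) := by rw [update_eq_self]
    _ ≤ ∑ y, P s (update x j y) := single_le_sum (fun y _ => hP s _) (mem_univ _)
    _ = ∑ y, P (update s j a) (update x j y) :=
      hns j s _ x fun i hi => (update_of_ne hi a s).symm

end NoSignaling

def HardyZero (P : (Fin 3 → Bool) → (Fin 3 → Fin 2) → ℝ) : Prop :=
  ∀ r : Fin 3, ∀ s : Fin 3 → Bool, s r = true → s (r + 1) = false →
    ∑ x : Fin 3 → Fin 2, (if x r ≠ 1 ∧ x (r + 1) = 0 then P s x else 0) = 0

namespace HardyZero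

variable {P : (Fin 3 → Bool) → (Fin 3 → Fin 2) → ℝ}

theorem eq_zero (hz : HardyZero P) (hP : ∀ s x, 0 ≤ P s x) {r : Fin 3} {s : Fin 3 → Bool}
    {x : Fin 3 → Fin 2} (hsr : s r = true) (hsr' : s (r + 1) = false) (hxr : x r = 0)
    (hxr' : x (r + 1) = 0) : P s x = 0 := by
  have h := hz r s hsr hsr'
  rw [← sum_filter] at h
  exact (sum_eq_zero_iff_of_nonneg fun y _ => hP s y).1 h x (by simp [hxr, hxr'])

theorem le_update (hz : HardyZero P) (hP : ∀ s x, 0 ≤ P s x) (hns : NoSignaling P)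
    {j : Fin 3} {s : Fin 3 → Bool} {x : Fin 3 → Fin 2} (hs : s (j + 1) = false)
    (hx : x (j + 1) = 0) : P s x ≤ P (update s j true) (update x j 1) := by
  have hj : j + 1 ≠ j := by fin_cases j <;> decide
  have hzero : P (update s j true) (update x j 0) = 0 :=
    hz.eq_zero hP (update_self ..) (by rwa [update_of_ne hj]) (update_self ..)
      (by rwa [update_of_ne hj])
  simpa only [Fin.sum_univ_two, hzero, zero_add] using hns.le_sum_update hP j s x true

theorem success_le (hz : HardyZero P) (hP : ∀ s x, 0 ≤ P s x) (hns : NoSignaling P)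
    (hv : P (fun _ => true) (fun _ => 1) = 0) (r : Fin 3) :
    P (fun _ => false) (fun _ => 0) ≤ P (fun _ => true) (update (fun _ => 1) (r + 1) 0) := by
  have hr : r + 1 ≠ r - 1 := by fin_cases r <;> decide
  set s : Fin 3 → Bool := update (update (fun _ => false) (r - 1) true) r true
  set x : Fin 3 → Fin 2 := update (update (fun _ => 0) (r - 1) 1) r 1
  have hs : update s (r + 1) true = fun _ => true := by fin_cases r <;> decide
  have hx : ∀ y, update x (r + 1) y = update (fun _ => 1) (r + 1) y := by
    fin_cases r <;> decide
  calc P (fun _ => false) (fun _ => 0)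
      ≤ P (update (fun _ => false) (r - 1) true) (update (fun _ => 0) (r - 1) 1) :=
        hz.le_update hP hns rfl rfl
    _ ≤ P s x := hz.le_update hP hns (by rw [update_of_ne hr]) (by rw [update_of_ne hr])
    _ ≤ ∑ y, P (update s (r + 1) true) (update x (r + 1) y) := hns.le_sum_update hP _ _ _ _
    _ = P (fun _ => true) (update (fun _ => 1) (r + 1) 0) := by
        simp [Fin.sum_univ_two, hs, hx, hv]

theorem success_le_one_third (hz : HardyZero P)
    (hP : ∀ s x, 0 ≤ P s x) (hsum : ∀ s, ∑ x, P s x = 1) (hns : NoSignaling P)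
    (hv : P (fun _ => true) (fun _ => 1) = 0) :
    P (fun _ => false) (fun _ => 0) ≤ 1 / 3 := by
  let g : Fin 3 → Fin 3 → Fin 2 := fun r => update (fun _ => 1) (r + 1) 0
  have hg : Injective g := by decide
  have hchain : ∑ _r : Fin 3, P (fun _ => false) (fun _ => 0) ≤ ∑ r, P (fun _ => true) (g r) :=
    sum_le_sum fun r _ => hz.success_le hP hns hv r
  have hle_one : ∑ r, P (fun _ => true) (g r) ≤ 1 :=
    calc ∑ r, P (fun _ => true) (g r) = ∑ x ∈ univ.map ⟨g, hg⟩, P (fun _ => true) x :=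
          (sum_map univ ⟨g, hg⟩ _).symm
      _ ≤ ∑ x, P (fun _ => true) x := sum_le_univ_sum_of_nonneg (hP _)
      _ = 1 := hsum _
  rw [sum_const, card_univ, Fintype.card_fin, nsmul_eq_mul, Nat.cast_ofNat] at hchain
  linarith

end HardyZero

def optimalSupport (s : Fin 3 → Bool) : Finset (Fin 3 → Fin 2) :=
  match s 0, s 1, s 2 with
  | false, false, false => {![0, 0, 0], ![1, 0, 1], ![1, 1, 0]}
  | false, false, true  => {![0, 0, 1], ![1, 0, 0], ![1, 1, 1]}
  | false, true,  false => {![0, 1, 0], ![1, 0, 1], ![1, 1, 0]}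
  | false, true,  true  => {![0, 1, 1], ![1, 0, 1], ![1, 1, 0]}
  | true,  false, false => {![0, 1, 0], ![1, 0, 0], ![1, 0, 1]}
  | true,  false, true  => {![0, 1, 1], ![1, 0, 0], ![1, 0, 1]}
  | true,  true,  false => {![0, 1, 0], ![1, 0, 1], ![1, 1, 0]}
  | true,  true,  true  => {![0, 1, 1], ![1, 0, 1], ![1, 1, 0]}

def optimalWeight (s : Fin 3 → Bool) (x : Fin 3 → Fin 2) : ℕ :=
  if x ∈ optimalSupport s then 1 else 0

theorem sum_optimalWeight : ∀ s, ∑ x, optimalWeight s x = 3 := by decide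

theorem optimalWeight_noSignaling : ∀ (j : Fin 3) (s s' : Fin 3 → Bool) (x : Fin 3 → Fin 2),
    (∀ i ≠ j, s i = s' i) →
    ∑ y, optimalWeight s (update x j y) = ∑ y, optimalWeight s' (update x j y) := by
  decide

theorem optimalWeight_hardyZero : ∀ (r : Fin 3) (s : Fin 3 → Bool) (x : Fin 3 → Fin 2),
    s r = true → s (r + 1) = false → x r ≠ 1 → x (r + 1) = 0 → optimalWeight s x = 0 := by
  decide

noncomputable def optimalBox (s : Fin 3 → Bool) (x : Fin 3 → Fin 2) : ℝ :=
  optimalWeight s x / 3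

theorem optimalBox_nonneg (s : Fin 3 → Bool) (x : Fin 3 → Fin 2) : 0 ≤ optimalBox s x := by
  unfold optimalBox; positivity

theorem sum_optimalBox (s : Fin 3 → Bool) : ∑ x, optimalBox s x = 1 := by
  simp only [optimalBox, ← sum_div, ← Nat.cast_sum, sum_optimalWeight]
  norm_num

theorem optimalBox_noSignaling : NoSignaling optimalBox := by
  intro j s s' x hs
  simp only [optimalBox, ← sum_div, ← Nat.cast_sum, optimalWeight_noSignaling j s s' x hs]

theorem optimalBox_hardyZero : HardyZero optimalBox := by
  intro r s hsr hsr'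
  refine sum_eq_zero fun x _ => ?_
  split_ifs with hx
  · simp [optimalBox, optimalWeight_hardyZero r s x hsr hsr' hx.1 hx.2]
  · rfl

theorem optimalBox_all_v : optimalBox (fun _ => true) (fun _ => 1) = 0 := by
  simp [optimalBox, show optimalWeight (fun _ => true) (fun _ => 1) = 0 by decide]

theorem optimalBox_all_u : optimalBox (fun _ => false) (fun _ => 0) = 1 / 3 := by
  simp [optimalBox, show optimalWeight (fun _ => false) (fun _ => 0) = 1 by decide]

/-- For three parties with two settings (`false` = `u_i`,
`true` = `v_i`) and two outcomes (`0` = outcome "1", `1` = outcome "2") each,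
the maximum of the success probability `P(u_1=1, u_2=1, u_3=1)` over all
no-signaling behaviors satisfying the modified Hardy zero conditions
(`P(v_r ≠ 2, u_{r+1} = 1) = 0` for `r = 1, 2, 3` cyclically and
`P(v_1=2, v_2=2, v_3=2) = 0`) equals `1/3`. -/
theorem statement18 :
    IsGreatest
      {q : ℝ | ∃ P : (Fin 3 → Bool) → (Fin 3 → Fin 2) → ℝ,
        (∀ s x, 0 ≤ P s x) ∧
        (∀ s, ∑ x, P s x = 1) ∧
        -- no-signaling
        (∀ (j : Fin 3) (s s' : Fin 3 → Bool) (x : Fin 3 → Fin 2),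
          (∀ i ≠ j, s i = s' i) →
          ∑ y : Fin 2, P s (Function.update x j y) =
            ∑ y : Fin 2, P s' (Function.update x j y)) ∧
        -- P(v_r ≠ 2, u_{r+1} = 1) = 0 for all r (cyclically)
        (∀ r : Fin 3, ∀ s : Fin 3 → Bool, s r = true → s (r + 1) = false →
          ∑ x : Fin 3 → Fin 2,
            (if x r ≠ 1 ∧ x (r + 1) = 0 then P s x else 0) = 0) ∧
        -- P(v_1 = 2, v_2 = 2, v_3 = 2) = 0
        P (fun _ => true) (fun _ => 1) = 0 ∧
        q = P (fun _ => false) (fun _ => 0)}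
      (1 / 3) := by
  refine ⟨⟨optimalBox, optimalBox_nonneg, sum_optimalBox, optimalBox_noSignaling,
    optimalBox_hardyZero, optimalBox_all_v, optimalBox_all_u.symm⟩, ?_⟩
  rintro q ⟨P, hP, hsum, hns, hz, hv, rfl⟩
  exact HardyZero.success_le_one_third hz hP hsum hns hv
end
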